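/- arXiv:2111.02880 — 4 statements merged into one kernel-verified Lean document; each statement's English description precedes it below -/
import Mathlib

section
/- Suppose W = [[W_XX, W_XL],[W_LX, W_LL]] is a block 2n×2n matrix satisfying the symplectic condition Wᵀ Ω W = Ω with Ω = [[0, g],[-g, 0]] for an invertible symmetric matrix g. If vectors K_O, K_E, P_O, P_E satisfy K_E = W_XX K_O + W_XL P_O and P_E = W_LX K_O + W_LL P_O, then the dual identities hold: g·K_O = W_LLᵀ g K_E − W_XLᵀ g P_E and g·P_O = −W_LXᵀ g K_E + W_XXᵀ g P_E. -/
open Matrix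

/-- Dual Killing identities from the symplectic property of the bilocal geodesic operator. -/
theorem dual_killing_identities (n : ℕ)
    (g W_XX W_XL W_LX W_LL : Matrix (Fin n) (Fin n) ℝ)
    (hgsymm : gᵀ = g) (hginv : IsUnit g)
    (hsymp : (Matrix.fromBlocks W_XX W_XL W_LX W_LL)ᵀ *
        Matrix.fromBlocks 0 g (-g) 0 * Matrix.fromBlocks W_XX W_XL W_LX W_LL
        = Matrix.fromBlocks 0 g (-g) 0)
    (K_O K_E P_O P_E : Fin n → ℝ)
    (hK : K_E = W_XX.mulVec K_O + W_XL.mulVec P_O)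
    (hP : P_E = W_LX.mulVec K_O + W_LL.mulVec P_O) :
    g.mulVec K_O = W_LLᵀ.mulVec (g.mulVec K_E) - W_XLᵀ.mulVec (g.mulVec P_E) ∧
    g.mulVec P_O = -W_LXᵀ.mulVec (g.mulVec K_E) + W_XXᵀ.mulVec (g.mulVec P_E) := by
  rw [Matrix.fromBlocks_transpose, Matrix.fromBlocks_multiply, Matrix.fromBlocks_multiply,
    Matrix.fromBlocks_inj] at hsymp
  obtain ⟨h1, h2, h3, h4⟩ := hsymp
  simp only [Matrix.mul_zero, Matrix.zero_mul, zero_add, add_zero, Matrix.mul_neg, Matrix.neg_mul, neg_mul] at h1 h2 h3 h4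
  -- h1 : -(W_LXᵀ * g * W_XX) + W_XXᵀ * g * W_LX = 0
  -- h2 : -(W_LXᵀ * g * W_XL) + W_XXᵀ * g * W_LL = g
  -- h3 : -(W_LLᵀ * g * W_XX) + W_XLᵀ * g * W_LX = -g
  -- h4 : -(W_LLᵀ * g * W_XL) + W_XLᵀ * g * W_LL = 0
  have h3' : W_LLᵀ * g * W_XX = g + W_XLᵀ * g * W_LX := by
    rw [← sub_eq_iff_eq_add, ← neg_inj, neg_sub, sub_eq_neg_add]; exact h3
  have h4' : W_LLᵀ * g * W_XL = W_XLᵀ * g * W_LL := neg_add_eq_zero.mp h4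
  have h2' : W_XXᵀ * g * W_LL = g + W_LXᵀ * g * W_XL := by
    rw [← sub_eq_iff_eq_add, sub_eq_neg_add]; exact h2
  have h1' : W_XXᵀ * g * W_LX = W_LXᵀ * g * W_XX := (neg_add_eq_zero.mp h1).symm
  subst hK hP
  constructor
  · simp only [Matrix.mulVec_add, Matrix.mulVec_mulVec, ← Matrix.mul_assoc,
      h3', h4', Matrix.add_mulVec]
    abel
  · simp only [Matrix.mulVec_add, Matrix.mulVec_mulVec, ← Matrix.mul_assoc,
      h1', h2', Matrix.add_mulVec]
    abel
end

section
/- Let R : ℝ → Matrix (Fin n) (Fin n) ℝ be twice continuously differentiable, and let A solve A'' = R A with A(0) = Id, A'(0) = 0. Then A admits the fourth-order Taylor expansion A(λ) = Id + (λ²/2!)·R(0) + (λ³/3!)·R'(0) + (λ⁴/4!)·(R''(0) + R(0)²) + o(λ⁴) as λ → 0. -/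
/-!
Integrating twice with the mean value theorem turns an `o(λᵏ)` bound on `F'' - P''` into an
`o(λᵏ⁺²)` bound on `F - P`, for any polynomial `P` matching `F` and `F'` at `0`. Applied to `R`
(continuity of `R''`) and to `A` (continuity of `A'' = R A`), this gives the second-order
expansions `R = R₀ + λ R₀' + λ²/2 R₀'' + o(λ²)` and `A = 1 + λ²/2 R₀ + o(λ²)`. By the Leibniz
rule their product gives `R A = R₀ + λ R₀' + λ²/2 (R₀'' + R₀²) + o(λ²)`, and since this is `A''`,
integrating twice more yields the fourth-order expansion of `A`.
-/

open Matrix Asymptotics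

attribute [local instance] Matrix.normedAddCommGroup Matrix.normedSpace

open Filter Topology
open scoped Nat

section TaylorPoly

variable {E : Type*} [NormedAddCommGroup E] [NormedSpace ℝ E]

noncomputable def taylorPoly {m : ℕ} (c : Fin m → E) (l : ℝ) : E :=
  ∑ i : Fin m, (l ^ (i : ℕ) / (i : ℕ)!) • c i

theorem taylorPoly_zero {m : ℕ} (c : Fin (m + 1) → E) : taylorPoly c 0 = c 0 := by
  simp [taylorPoly, Fin.sum_univ_succ]

theorem hasDerivAt_taylorPoly {m : ℕ} (c : Fin (m + 1) → E) (x : ℝ) :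
    HasDerivAt (taylorPoly c) (taylorPoly (Fin.tail c) x) x := by
  have hterm (i : Fin m) :
      HasDerivAt (fun l : ℝ => (l ^ ((i : ℕ) + 1) / ((i : ℕ) + 1)!) • c i.succ)
        ((x ^ (i : ℕ) / (i : ℕ)!) • c i.succ) x := by
    convert ((hasDerivAt_pow ((i : ℕ) + 1) x).div_const _).smul_const (c i.succ) using 2
    rw [Nat.factorial_succ]
    push_cast
    field_simp
  unfold taylorPoly
  simp only [Fin.sum_univ_succ, Fin.val_zero, pow_zero, Nat.factorial_zero, Nat.cast_one,
    div_one, one_smul, Fin.val_succ, Fin.tail]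
  exact (HasDerivAt.fun_sum fun i _ => hterm i).const_add _

theorem continuous_taylorPoly {m : ℕ} (c : Fin m → E) : Continuous (taylorPoly c) := by
  unfold taylorPoly
  fun_prop

theorem isLittleO_sub_taylorPoly_of_hasDerivAt {F F' : ℝ → E} {m k : ℕ} (c : Fin (m + 1) → E)
    (hF : ∀ x, HasDerivAt F (F' x) x) (h0 : F 0 = c 0)
    (h : (fun l => F' l - taylorPoly (Fin.tail c) l) =o[𝓝 0] (· ^ k)) :
    (fun l => F l - taylorPoly c l) =o[𝓝 0] (· ^ (k + 1)) := by
  have := Convex.isLittleO_pow_succ_real convex_univ (Set.mem_univ 0)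
    (fun x _ => ((hF x).sub (hasDerivAt_taylorPoly c x)).hasDerivWithinAt) (by simpa using h)
  simpa [h0, taylorPoly_zero] using this

theorem isLittleO_sub_taylorPoly_of_hasDerivAt_two {F F' F'' : ℝ → E} {m k : ℕ}
    (c : Fin (m + 2) → E) (hF : ∀ x, HasDerivAt F (F' x) x)
    (hF' : ∀ x, HasDerivAt F' (F'' x) x) (h0 : F 0 = c 0) (h1 : F' 0 = c 1)
    (h : (fun l => F'' l - taylorPoly (Fin.tail (Fin.tail c)) l) =o[𝓝 0] (· ^ k)) :
    (fun l => F l - taylorPoly c l) =o[𝓝 0] (· ^ (k + 2)) :=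
  isLittleO_sub_taylorPoly_of_hasDerivAt c hF h0 <|
    isLittleO_sub_taylorPoly_of_hasDerivAt (Fin.tail c) hF' h1 h

theorem ContinuousAt.isLittleO_sub_taylorPoly_pow_zero {F : ℝ → E} (hF : ContinuousAt F 0)
    (c : Fin 1 → E) (hc : c 0 = F 0) :
    (fun l => F l - taylorPoly c l) =o[𝓝 0] (· ^ 0) := by
  simpa [taylorPoly, hc, isLittleO_one_iff, tendsto_sub_nhds_zero_iff] using hF.tendsto

theorem ContinuousAt.isLittleO_pow_succ_smul {w : ℝ → E} (hw : ContinuousAt w 0) (k : ℕ) :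
    (fun l => l ^ (k + 1) • w l) =o[𝓝 0] (· ^ k) := by
  simpa using (isLittleO_pow_pow (𝕜 := ℝ) k.lt_succ_self).smul_isBigO (hw.tendsto.isBigO_one ℝ)

end TaylorPoly

section MatrixMul

variable {α 𝕜 m n p : Type*} [NormedRing 𝕜] [Fintype m] [Fintype n] [Fintype p]
  {l : Filter α} {g : α → ℝ}

theorem Asymptotics.IsLittleO.matrix_mul_isBigO_one {f : α → Matrix m n 𝕜}
    {h : α → Matrix n p 𝕜} (hf : f =o[l] g) (hh : h =O[l] fun _ => (1 : ℝ)) :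
    (fun x => f x * h x) =o[l] g := by
  refine isLittleO_pi.2 fun i => isLittleO_pi.2 fun j => ?_
  simp only [Matrix.mul_apply]
  refine IsLittleO.fun_sum fun k _ => ?_
  simpa using
    (isLittleO_pi.1 (isLittleO_pi.1 hf i) k).mul_isBigO (isBigO_pi.1 (isBigO_pi.1 hh k) j)

theorem Asymptotics.IsBigO.matrix_mul_isLittleO {f : α → Matrix m n 𝕜} {h : α → Matrix n p 𝕜}
    (hf : f =O[l] fun _ => (1 : ℝ)) (hh : h =o[l] g) : (fun x => f x * h x) =o[l] g := by
  refine isLittleO_pi.2 fun i => isLittleO_pi.2 fun j => ?_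
  simp only [Matrix.mul_apply]
  refine IsLittleO.fun_sum fun k _ => ?_
  simpa using
    (isBigO_pi.1 (isBigO_pi.1 hf i) k).mul_isLittleO (isLittleO_pi.1 (isLittleO_pi.1 hh k) j)

theorem isLittleO_mul_sub_taylorPoly_two {R : ℝ → Matrix m n ℝ} {A : ℝ → Matrix n p ℝ}
    {r₀ r₁ r₂ : Matrix m n ℝ} {a₀ a₁ a₂ : Matrix n p ℝ}
    (hR : (fun l => R l - taylorPoly ![r₀, r₁, r₂] l) =o[𝓝 0] (· ^ 2))
    (hA : (fun l => A l - taylorPoly ![a₀, a₁, a₂] l) =o[𝓝 0] (· ^ 2)) :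
    (fun l => R l * A l - taylorPoly ![r₀ * a₀, r₁ * a₀ + r₀ * a₁,
      r₂ * a₀ + (2 : ℝ) • (r₁ * a₁) + r₀ * a₂] l) =o[𝓝 0] (· ^ 2) := by
  have hsplit : (fun l => R l * A l - taylorPoly ![r₀ * a₀, r₁ * a₀ + r₀ * a₁,
      r₂ * a₀ + (2 : ℝ) • (r₁ * a₁) + r₀ * a₂] l) = fun l =>
      (R l - taylorPoly ![r₀, r₁, r₂] l) * A l + taylorPoly ![r₀, r₁, r₂] l *
        (A l - taylorPoly ![a₀, a₁, a₂] l) +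
        l ^ 3 • ((2⁻¹ : ℝ) • (r₁ * a₂ + r₂ * a₁) + (l / 4) • (r₂ * a₂)) := by
    funext l
    simp [taylorPoly, Fin.sum_univ_succ, Matrix.sub_mul, Matrix.mul_sub, Matrix.add_mul,
      Matrix.mul_add, Matrix.smul_mul, Matrix.mul_smul]
    module
  have hA_bdd : A =O[𝓝 0] fun _ => (1 : ℝ) := by
    have hsq : (fun l : ℝ => l ^ 2) =O[𝓝 0] fun _ => (1 : ℝ) :=
      ((continuous_pow 2).tendsto' 0 0 (by simp)).isBigO_one ℝ
    exact ((hA.isBigO.trans hsq).add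
      (((continuous_taylorPoly ![a₀, a₁, a₂]).tendsto 0).isBigO_one ℝ)).congr_left
      fun l => sub_add_cancel _ _
  rw [hsplit]
  exact ((hR.matrix_mul_isBigO_one hA_bdd).add
    ((((continuous_taylorPoly ![r₀, r₁, r₂]).tendsto 0).isBigO_one ℝ).matrix_mul_isLittleO hA)).add
    ((by fun_prop : Continuous _).continuousAt.isLittleO_pow_succ_smul 2)

end MatrixMul

/-- Fourth-order Taylor expansion of the bilocal operator `W_XX` near the observer:
`A(λ) = Id + (λ²/2!)R(0) + (λ³/3!)R'(0) + (λ⁴/4!)(R''(0) + R(0)²) + o(λ⁴)`. -/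
theorem wxx_taylor_expansion (n : ℕ)
    (R : ℝ → Matrix (Fin n) (Fin n) ℝ) (hR : ContDiff ℝ 2 R)
    (A : ℝ → Matrix (Fin n) (Fin n) ℝ) (hA : ContDiff ℝ 2 A)
    (hodeA : ∀ l : ℝ, deriv (deriv A) l = R l * A l)
    (hA0 : A 0 = 1) (hA0' : deriv A 0 = 0) :
    (fun l : ℝ => A l - (1 + (l ^ 2 / 2) • R 0 + (l ^ 3 / 6) • deriv R 0
        + (l ^ 4 / 24) • (deriv (deriv R) 0 + R 0 * R 0)))
      =o[nhds 0] fun l : ℝ => l ^ 4 := by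
  have hR' (x : ℝ) : HasDerivAt R (deriv R x) x := (hR.differentiable two_ne_zero x).hasDerivAt
  have hR'' (x : ℝ) : HasDerivAt (deriv R) (deriv (deriv R) x) x :=
    (hR.differentiable_deriv_two x).hasDerivAt
  have hA' (x : ℝ) : HasDerivAt A (deriv A x) x := (hA.differentiable two_ne_zero x).hasDerivAt
  have hA'' (x : ℝ) : HasDerivAt (deriv A) (R x * A x) x :=
    hodeA x ▸ (hA.differentiable_deriv_two x).hasDerivAt
  have hR_jet : (fun l => R l - taylorPoly ![R 0, deriv R 0, deriv (deriv R) 0] l)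
      =o[𝓝 0] (· ^ 2) :=
    isLittleO_sub_taylorPoly_of_hasDerivAt_two _ hR' hR'' rfl rfl
      ((hR.deriv' (n := 1)).continuous_deriv_one.continuousAt.isLittleO_sub_taylorPoly_pow_zero
        _ rfl)
  have hA_jet : (fun l => A l - taylorPoly ![1, 0, R 0] l) =o[𝓝 0] (· ^ 2) :=
    isLittleO_sub_taylorPoly_of_hasDerivAt_two _ hA' hA'' hA0 hA0'
      ((hR.continuous.matrix_mul hA.continuous).continuousAt.isLittleO_sub_taylorPoly_pow_zero _
        (by simp [hA0]))
  have hA_jet₄ : (fun l => A l - taylorPoly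
      ![1, 0, R 0, deriv R 0, deriv (deriv R) 0 + R 0 * R 0] l) =o[𝓝 0] (· ^ 4) :=
    isLittleO_sub_taylorPoly_of_hasDerivAt_two _ hA' hA'' hA0 hA0'
      (by simpa using isLittleO_mul_sub_taylorPoly_two hR_jet hA_jet)
  convert hA_jet₄ using 3 with l
  norm_num [taylorPoly, Fin.sum_univ_succ, Nat.factorial]
  abel
end

section
/- Let R : ℝ → Matrix (Fin n) (Fin n) ℝ be twice continuously differentiable, and let B solve B'' = R B with B(0) = 0, B'(0) = Id. Then B admits the expansion B(λ) = λ·Id + (λ³/3!)·R(0) + (λ⁴/4!)·2R'(0) + (λ⁵/5!)·(3R''(0) + R(0)²) + o(λ⁵) as λ → 0. -/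
/-!
Integrating from `0` turns an `o(xᵏ)` remainder into an `o(xᵏ⁺¹)` one (mean value inequality),
so an expansion of `B'' = R B` to order `k` gives an expansion of `B` to order `k + 2` whose first
two coefficients are `B 0 = 0` and `B' 0 = 1`. Bootstrap: `B = x + o(x)` gives
`R B = x R(0) + o(x)`, hence `B = x + x³/6 R(0) + o(x³)`; multiplying this by the second-order
Taylor expansion of `R` gives `R B` to order `3`, hence `B` to order `5`.
-/

open Matrix Asymptotics

attribute [local instance] Matrix.normedAddCommGroup Matrix.normedSpace

open Filter Topology Nat

section TaylorSum

variable {E : Type*} [NormedAddCommGroup E] [NormedSpace ℝ E]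

noncomputable def taylorSum {m : ℕ} (a : Fin m → E) (x : ℝ) : E :=
  ∑ i : Fin m, (x ^ (i : ℕ) / (i : ℕ)!) • a i

theorem taylorSum_zero {m : ℕ} (a : Fin (m + 1) → E) : taylorSum a 0 = a 0 := by
  simp [taylorSum, Fin.sum_univ_succ]

theorem hasDerivAt_taylorSum {m : ℕ} (a : Fin (m + 1) → E) (x : ℝ) :
    HasDerivAt (taylorSum a) (taylorSum (Fin.tail a) x) x := by
  unfold taylorSum
  simp only [Fin.sum_univ_succ, Fin.val_zero, pow_zero, factorial_zero, Nat.cast_one, div_one,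
    one_smul, Fin.val_succ]
  refine (HasDerivAt.fun_sum fun i _ => ?_).const_add (a 0)
  have := ((hasDerivAt_pow (i + 1 : ℕ) x).div_const ((i + 1 : ℕ)! : ℝ)).smul_const (a i.succ)
  convert this using 2
  · rw [factorial_succ]
    push_cast
    field_simp
  · rfl

theorem isLittleO_pow_succ_of_hasDerivAt {f f' : ℝ → E} {k : ℕ}
    (hf : ∀ x, HasDerivAt f (f' x) x) (h : f' =o[𝓝 0] (· ^ k)) :
    (fun x => f x - f 0) =o[𝓝 0] (· ^ (k + 1)) := by
  simpa using Convex.isLittleO_pow_succ_real convex_univ (Set.mem_univ 0)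
    (fun x _ => (hf x).hasDerivWithinAt) (by simpa using h)

theorem isLittleO_sub_taylorSum_of_hasDerivAt {m k : ℕ} {f f' : ℝ → E} {a : Fin (m + 1) → E}
    (hf : ∀ x, HasDerivAt f (f' x) x) (h0 : f 0 = a 0)
    (h : (fun x => f' x - taylorSum (Fin.tail a) x) =o[𝓝 0] (· ^ k)) :
    (fun x => f x - taylorSum a x) =o[𝓝 0] (· ^ (k + 1)) := by
  simpa [taylorSum_zero, h0] using
    isLittleO_pow_succ_of_hasDerivAt (fun x => (hf x).sub (hasDerivAt_taylorSum a x)) h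

theorem isLittleO_sub_taylorSum_of_hasDerivAt_hasDerivAt {m k : ℕ} {f f' f'' : ℝ → E}
    {a : Fin (m + 2) → E} (hf : ∀ x, HasDerivAt f (f' x) x)
    (hf' : ∀ x, HasDerivAt f' (f'' x) x) (h0 : f 0 = a 0) (h1 : f' 0 = a 1)
    (h : (fun x => f'' x - taylorSum (Fin.tail (Fin.tail a)) x) =o[𝓝 0] (· ^ k)) :
    (fun x => f x - taylorSum a x) =o[𝓝 0] (· ^ (k + 2)) :=
  isLittleO_sub_taylorSum_of_hasDerivAt hf h0 (isLittleO_sub_taylorSum_of_hasDerivAt hf' h1 h)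

theorem ContDiff.hasDerivAt_deriv {f : ℝ → E} (hf : ContDiff ℝ 2 f) (x : ℝ) :
    HasDerivAt (deriv f) (deriv (deriv f) x) x :=
  ((hf.deriv' (n := 1)).differentiable one_ne_zero x).hasDerivAt

theorem ContDiff.isLittleO_sub_taylorSum_two {f : ℝ → E} (hf : ContDiff ℝ 2 f) :
    (fun x => f x - taylorSum ![f 0, deriv f 0, deriv (deriv f) 0] x) =o[𝓝 0] (· ^ 2) := by
  refine isLittleO_sub_taylorSum_of_hasDerivAt_hasDerivAt
    (fun x => (hf.differentiable two_ne_zero x).hasDerivAt) hf.hasDerivAt_deriv rfl rfl ?_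
  have := ((hf.deriv' (n := 1)).continuous_deriv le_rfl).continuousAt (x := 0)
  simpa [taylorSum, isLittleO_one_iff] using tendsto_sub_nhds_zero_iff.2 this

end TaylorSum

section MatrixProduct

variable {𝕜 ι : Type*} [NontriviallyNormedField 𝕜] [CompleteSpace 𝕜] [Fintype ι] [DecidableEq ι]

theorem Matrix.isBoundedBilinearMap_mul :
    IsBoundedBilinearMap 𝕜 fun p : Matrix ι ι 𝕜 × Matrix ι ι 𝕜 => p.1 * p.2 :=
  (LinearMap.toContinuousLinearMap (LinearMap.toContinuousLinearMap.toLinearMap ∘ₗ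
    LinearMap.mul 𝕜 (Matrix ι ι 𝕜))).isBoundedBilinearMap

theorem Asymptotics.IsBigO.matrix_mul_isLittleO_s9 {α : Type*} {l : Filter α}
    {A C : α → Matrix ι ι 𝕜} {u v : α → ℝ} (hA : A =O[l] u) (hC : C =o[l] v) :
    (fun x => A x * C x) =o[l] fun x => u x * v x :=
  Matrix.isBoundedBilinearMap_mul.isBigO_comp.trans_isLittleO
    (hA.norm_left.mul_isLittleO hC.norm_left)

end MatrixProduct

section JacobiEquation

variable {ι : Type*} [Fintype ι] [DecidableEq ι] {R B : ℝ → Matrix ι ι ℝ}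

theorem isLittleO_mul_sub_linear (hR : ContinuousAt R 0)
    (hB : (fun x => B x - taylorSum ![0, 1] x) =o[𝓝 0] (· ^ 1)) :
    (fun x => R x * B x - taylorSum ![0, R 0] x) =o[𝓝 0] (· ^ 1) := by
  have hR0 : (fun x => R x - R 0) =o[𝓝 0] (· ^ 0) := by
    simp only [pow_zero]
    exact (isLittleO_one_iff ℝ).2 (tendsto_sub_nhds_zero_iff.2 hR)
  have hRB : (fun x => R x * (B x - taylorSum ![0, 1] x)) =o[𝓝 0] (· ^ 1) := by
    simpa using (hR.isBigO_one ℝ).matrix_mul_isLittleO_s9 hB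
  have hxR : (fun x => x • (R x - R 0)) =o[𝓝 0] (· ^ 1) := by
    simpa using (isBigO_refl (fun x : ℝ => x) (𝓝 0)).smul_isLittleO hR0
  refine (hRB.add hxR).congr (fun x => ?_) (fun x => rfl)
  simp [taylorSum, Fin.sum_univ_succ, mul_sub, smul_sub]

theorem isLittleO_mul_sub_cubic {R₁ R₂ : Matrix ι ι ℝ} (hR : ContinuousAt R 0)
    (hR₂ : (fun x => R x - taylorSum ![R 0, R₁, R₂] x) =o[𝓝 0] (· ^ 2))
    (hB : (fun x => B x - taylorSum ![0, 1, 0, R 0] x) =o[𝓝 0] (· ^ 3)) :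
    (fun x => R x * B x - taylorSum ![0, R 0, 2 • R₁, (3 : ℝ) • R₂ + R 0 * R 0] x)
      =o[𝓝 0] (· ^ 3) := by
  have hRR0 : (fun x => (R x - R 0) * R 0) =o[𝓝 0] (· ^ 0) := by
    have := (hR.tendsto.sub_const (R 0)).mul_const (R 0)
    rw [sub_self, zero_mul] at this
    simp only [pow_zero]
    exact (isLittleO_one_iff ℝ).2 this
  have hRB : (fun x => R x * (B x - taylorSum ![0, 1, 0, R 0] x)) =o[𝓝 0] (· ^ 3) := by
    simpa using (hR.isBigO_one ℝ).matrix_mul_isLittleO_s9 hB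
  have hxR : (fun x => x • (R x - taylorSum ![R 0, R₁, R₂] x)) =o[𝓝 0] (· ^ 3) :=
    ((isBigO_refl _ _).smul_isLittleO hR₂).congr (fun x => rfl)
      (fun x => by rw [smul_eq_mul]; ring)
  have hx3 : (fun x => (x ^ 3 / 6) • ((R x - R 0) * R 0)) =o[𝓝 0] (· ^ 3) :=
    (((isBigO_refl (· ^ 3) (𝓝 (0 : ℝ))).const_mul_left (1 / 6 : ℝ)).smul_isLittleO hRR0).congr
      (fun x => by ring_nf) (fun x => by simp)
  refine ((hRB.add hxR).add hx3).congr (fun x => ?_) (fun x => rfl)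
  simp [taylorSum, Fin.sum_univ_succ, Nat.factorial, mul_sub, mul_add, smul_sub, smul_add, sub_mul,
    -nsmul_eq_mul]
  module

end JacobiEquation

/-- Fifth-order Taylor expansion of the Jacobi map / bilocal operator `W_XL` near the
observer: `B(λ) = λ·Id + (λ³/3!)R(0) + (λ⁴/4!)·2R'(0) + (λ⁵/5!)(3R''(0) + R(0)²) + o(λ⁵)`. -/
theorem wxl_taylor_expansion (n : ℕ)
    (R : ℝ → Matrix (Fin n) (Fin n) ℝ) (hR : ContDiff ℝ 2 R)
    (B : ℝ → Matrix (Fin n) (Fin n) ℝ) (hB : ContDiff ℝ 2 B)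
    (hodeB : ∀ l : ℝ, deriv (deriv B) l = R l * B l)
    (hB0 : B 0 = 0) (hB0' : deriv B 0 = 1) :
    (fun l : ℝ => B l - (l • (1 : Matrix (Fin n) (Fin n) ℝ) + (l ^ 3 / 6) • R 0
        + (l ^ 4 / 24) • (2 • deriv R 0)
        + (l ^ 5 / 120) • ((3 : ℝ) • deriv (deriv R) 0 + R 0 * R 0)))
      =o[nhds 0] fun l : ℝ => l ^ 5 := by
  have hB' : ∀ x, HasDerivAt B (deriv B x) x :=
    fun x => (hB.differentiable two_ne_zero x).hasDerivAt
  have hB'' : ∀ x, HasDerivAt (deriv B) (R x * B x) x := fun x => hodeB x ▸ hB.hasDerivAt_deriv x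
  have hR0 : ContinuousAt R 0 := hR.continuous.continuousAt
  have hB₁ : (fun x => B x - taylorSum ![0, 1] x) =o[𝓝 0] (· ^ 1) := by
    refine isLittleO_sub_taylorSum_of_hasDerivAt hB' hB0 ?_
    simpa [taylorSum, hB0', isLittleO_one_iff] using
      tendsto_sub_nhds_zero_iff.2 (hB'' 0).continuousAt
  have hB₃ : (fun x => B x - taylorSum ![0, 1, 0, R 0] x) =o[𝓝 0] (· ^ 3) :=
    isLittleO_sub_taylorSum_of_hasDerivAt_hasDerivAt hB' hB'' hB0 hB0'
      (isLittleO_mul_sub_linear hR0 hB₁)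
  have hB₅ : (fun x => B x - taylorSum
      ![0, 1, 0, R 0, 2 • deriv R 0, (3 : ℝ) • deriv (deriv R) 0 + R 0 * R 0] x) =o[𝓝 0] (· ^ 5) :=
    isLittleO_sub_taylorSum_of_hasDerivAt_hasDerivAt hB' hB'' hB0 hB0'
      (isLittleO_mul_sub_cubic hR0 hR.isLittleO_sub_taylorSum_two hB₃)
  refine hB₅.congr_left fun x => ?_
  norm_num [taylorSum, Fin.sum_univ_succ, Nat.factorial, add_assoc]
end

section
/- Under the hypotheses that R(λ) is symmetric for all λ, the matrix solutions A (with A(0)=Id, A'(0)=0) and B (with B(0)=0, B'(0)=Id) of X'' = R X satisfy: A(λ)ᵀ A'(λ) is symmetric for all λ, and B(λ)ᵀ B'(λ) is symmetric for all λ. -/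
/-!
Since `R` is symmetric, the Wronskian `W = Xᵀ Y' - X'ᵀ Y` of two solutions of `X'' = R X` has
derivative `Xᵀ R Y - (R X)ᵀ Y = 0`, so it is constant. For `X = Y` the vanishing of `W` says
exactly that `Xᵀ X'` is symmetric, and `W(A, A)` and `W(B, B)` vanish at `0` because
`A'(0) = 0` and `B(0) = 0`.
-/

open Matrix

attribute [local instance] Matrix.normedAddCommGroup Matrix.normedSpace

section MatrixCalculus

variable {𝕜 : Type*} [NontriviallyNormedField 𝕜] [CompleteSpace 𝕜]
  {l m n : Type*} [Fintype l] [Fintype m] [Fintype n]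

theorem HasDerivAt.matrix_mul {f : 𝕜 → Matrix l m 𝕜} {g : 𝕜 → Matrix m n 𝕜}
    {f' : Matrix l m 𝕜} {g' : Matrix m n 𝕜} {x : 𝕜}
    (hf : HasDerivAt f f' x) (hg : HasDerivAt g g' x) :
    HasDerivAt (fun y => f y * g y) (f' * g x + f x * g') x := by
  rw [add_comm]
  exact (mulLinearMap 𝕜).toContinuousBilinearMap.hasDerivAt_of_bilinear
    (fun _ => hf) (fun _ => hg)

theorem HasDerivAt.matrix_transpose {f : 𝕜 → Matrix m n 𝕜} {f' : Matrix m n 𝕜} {x : 𝕜}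
    (hf : HasDerivAt f f' x) : HasDerivAt (fun y => (f y)ᵀ) f'ᵀ x :=
  (transposeLinearEquiv m n 𝕜 𝕜).toLinearMap.toContinuousLinearMap.hasFDerivAt.comp_hasDerivAt
    x hf

end MatrixCalculus

noncomputable def wronskian {l m n : Type*} [Fintype m]
    (X : ℝ → Matrix m n ℝ) (Y : ℝ → Matrix m l ℝ) (t : ℝ) : Matrix n l ℝ :=
  (X t)ᵀ * deriv Y t - (deriv X t)ᵀ * Y t

theorem isSymm_transpose_mul_deriv_iff {m n : Type*} [Fintype m]
    {X : ℝ → Matrix m n ℝ} {t : ℝ} :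
    ((X t)ᵀ * deriv X t).IsSymm ↔ wronskian X X t = 0 := by
  rw [wronskian, sub_eq_zero, IsSymm, transpose_mul, transpose_transpose, eq_comm]

theorem wronskian_eq_of_transpose_eq {l m n : Type*} [Fintype l] [Fintype m] [Fintype n]
    {R : ℝ → Matrix m m ℝ} (hR : ∀ t, (R t)ᵀ = R t)
    {X : ℝ → Matrix m n ℝ} {Y : ℝ → Matrix m l ℝ}
    (hX : ContDiff ℝ 2 X) (hY : ContDiff ℝ 2 Y)
    (hodeX : ∀ t, deriv (deriv X) t = R t * X t) (hodeY : ∀ t, deriv (deriv Y) t = R t * Y t)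
    (s t : ℝ) : wronskian X Y s = wronskian X Y t := by
  have hderiv : ∀ t, HasDerivAt (wronskian X Y) 0 t := by
    intro t
    have hX₁ := (hX.differentiable two_ne_zero t).hasDerivAt
    have hX₂ := (hX.differentiable_deriv_two t).hasDerivAt
    have hY₁ := (hY.differentiable two_ne_zero t).hasDerivAt
    have hY₂ := (hY.differentiable_deriv_two t).hasDerivAt
    -- the type ascription puts `deriv` at the `Matrix` instances used in `hodeX` and `hodeY`
    have hW : HasDerivAt (wronskian X Y) ((deriv X t)ᵀ * deriv Y t + (X t)ᵀ * deriv (deriv Y) t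
        - ((deriv (deriv X) t)ᵀ * Y t + (deriv X t)ᵀ * deriv Y t)) t :=
      (hX₁.matrix_transpose.matrix_mul hY₂).sub (hX₂.matrix_transpose.matrix_mul hY₁)
    rwa [hodeX, hodeY, transpose_mul, hR, Matrix.mul_assoc, add_sub_add_comm, sub_add_sub_cancel,
      sub_self] at hW
  exact is_const_of_deriv_eq_zero (fun t => (hderiv t).differentiableAt)
    (fun t => (hderiv t).deriv) s t

theorem bgo_symmetric_products_general (n : ℕ)
    (R : ℝ → Matrix (Fin n) (Fin n) ℝ)
    (hRsymm : ∀ l : ℝ, (R l)ᵀ = R l)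
    (A B : ℝ → Matrix (Fin n) (Fin n) ℝ)
    (hA : ContDiff ℝ 2 A) (hB : ContDiff ℝ 2 B)
    (hodeA : ∀ l : ℝ, deriv (deriv A) l = R l * A l)
    (hA0' : deriv A 0 = 0)
    (hodeB : ∀ l : ℝ, deriv (deriv B) l = R l * B l)
    (hB0 : B 0 = 0) :
    ∀ l : ℝ, ((A l)ᵀ * deriv A l).IsSymm ∧ ((B l)ᵀ * deriv B l).IsSymm := by
  intro l
  rw [isSymm_transpose_mul_deriv_iff, isSymm_transpose_mul_deriv_iff,
    wronskian_eq_of_transpose_eq hRsymm hA hA hodeA hodeA l 0,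
    wronskian_eq_of_transpose_eq hRsymm hB hB hodeB hodeB l 0]
  simp [wronskian, hA0', hB0]

/-- Two of the symplectic constraints on the bilocal geodesic operators: for `R(λ)`
symmetric, `A(λ)ᵀ A'(λ)` and `B(λ)ᵀ B'(λ)` are symmetric for all `λ`. -/
theorem bgo_symmetric_products (n : ℕ)
    (R : ℝ → Matrix (Fin n) (Fin n) ℝ) (hRcont : Continuous R)
    (hRsymm : ∀ l : ℝ, (R l)ᵀ = R l)
    (A B : ℝ → Matrix (Fin n) (Fin n) ℝ)
    (hA : ContDiff ℝ 2 A) (hB : ContDiff ℝ 2 B)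
    (hodeA : ∀ l : ℝ, deriv (deriv A) l = R l * A l)
    (hA0 : A 0 = 1) (hA0' : deriv A 0 = 0)
    (hodeB : ∀ l : ℝ, deriv (deriv B) l = R l * B l)
    (hB0 : B 0 = 0) (hB0' : deriv B 0 = 1) :
    ∀ l : ℝ, ((A l)ᵀ * deriv A l).IsSymm ∧ ((B l)ᵀ * deriv B l).IsSymm :=
  bgo_symmetric_products_general n R hRsymm A B hA hB hodeA hA0' hodeB hB0
end
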